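/- Let G be a graph of order n ≥ 2 and let H be a graph with root vertex v and at least two vertices. If every minimum-weight Roman dominating function f on H satisfies f(v) = 1, then γ_R(G∘H) = n·(γ_R(H) − 1) + γ_R(G). -/

import Mathlib

open Finset
open scoped Classical

/-- `S` is a dominating set of `G`: every vertex outside `S` has a neighbor in `S`. -/
def IsDomSet {α : Type*} (G : SimpleGraph α) (S : Set α) : Prop :=
  ∀ v ∉ S, ∃ u ∈ S, G.Adj u v

/-- The domination number `γ(G)`. -/
noncomputable def domNum {α : Type*} (G : SimpleGraph α) [Fintype α] : ℕ :=
  sInf {k | ∃ S : Finset α, IsDomSet G ↑S ∧ S.card = k}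

/-- The rooted product `G ∘ H` with root `v` of `H`: one copy of `H` for each vertex of `G`,
identifying the root of the `a`-th copy with the vertex `a` of `G`. -/
def rootedProd {α β : Type*} (G : SimpleGraph α) (H : SimpleGraph β) (v : β) :
    SimpleGraph (α × β) where
  Adj x y := (x.2 = v ∧ y.2 = v ∧ G.Adj x.1 y.1) ∨ (x.1 = y.1 ∧ H.Adj x.2 y.2)
  symm := by
    constructor
    rintro x y (⟨h1, h2, h3⟩ | ⟨h1, h2⟩)
    · exact Or.inl ⟨h2, h1, h3.symm⟩
    · exact Or.inr ⟨h1.symm, h2.symm⟩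
  loopless := by
    constructor
    rintro x (⟨_, _, h⟩ | ⟨_, h⟩)
    · exact G.loopless.irrefl _ h
    · exact H.loopless.irrefl _ h

/-- The graph `G - v` obtained by deleting the vertex `v`. -/
def deleteVert {α : Type*} (G : SimpleGraph α) (v : α) : SimpleGraph {u : α // u ≠ v} :=
  SimpleGraph.comap Subtype.val G

/-- The graph `G - A` obtained by deleting a set `A` of vertices. -/
def deleteSet {α : Type*} (G : SimpleGraph α) (A : Set α) : SimpleGraph {u : α // u ∉ A} :=
  SimpleGraph.comap Subtype.val G

/-- `f` is a Roman dominating function on `G`. -/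
def IsRDF {α : Type*} (G : SimpleGraph α) (f : α → ℕ) : Prop :=
  (∀ u, f u ≤ 2) ∧ ∀ u, f u = 0 → ∃ w, G.Adj u w ∧ f w = 2

/-- The Roman domination number `γ_R(G)`. -/
noncomputable def romanDomNum {α : Type*} (G : SimpleGraph α) [Fintype α] : ℕ :=
  sInf {k | ∃ f : α → ℕ, IsRDF G f ∧ ∑ u, f u = k}

/-- `S` is an independent set of `G`. -/
def IsIndep {α : Type*} (G : SimpleGraph α) (S : Set α) : Prop :=
  ∀ u ∈ S, ∀ w ∈ S, ¬ G.Adj u w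

/-- The independence number `α(G)`. -/
noncomputable def indepNum {α : Type*} (G : SimpleGraph α) [Fintype α] : ℕ :=
  sSup {k | ∃ S : Finset α, IsIndep G ↑S ∧ S.card = k}

/-- The independent domination number `i(G)`. -/
noncomputable def indepDomNum {α : Type*} (G : SimpleGraph α) [Fintype α] : ℕ :=
  sInf {k | ∃ S : Finset α, IsDomSet G ↑S ∧ IsIndep G ↑S ∧ S.card = k}

/-- `S` is a connected dominating set of `G`. -/
def IsConnDomSet {α : Type*} (G : SimpleGraph α) (S : Set α) : Prop :=
  IsDomSet G S ∧ (G.induce S).Connected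

/-- The connected domination number `γ_c(G)`. -/
noncomputable def connDomNum {α : Type*} (G : SimpleGraph α) [Fintype α] : ℕ :=
  sInf {k | ∃ S : Finset α, IsConnDomSet G ↑S ∧ S.card = k}

/-- `D` is a super dominating set of `G`: every `w ∉ D` has a neighbor `u ∈ D` with
`N(u) ⊆ D ∪ {w}`. -/
def IsSuperDomSet {α : Type*} (G : SimpleGraph α) (D : Set α) : Prop :=
  ∀ w ∉ D, ∃ u ∈ D, G.Adj u w ∧ ∀ x, G.Adj u x → x ∈ D ∪ {w}

/-- The super domination number `γ_sp(G)`. -/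
noncomputable def superDomNum {α : Type*} (G : SimpleGraph α) [Fintype α] : ℕ :=
  sInf {k | ∃ S : Finset α, IsSuperDomSet G ↑S ∧ S.card = k}

/-- The number of end vertices (vertices of degree one) of `G`, denoted `n₁(G)`. -/
noncomputable def endVertCount {α : Type*} (G : SimpleGraph α) [Fintype α] : ℕ :=
  Nat.card {u : α // G.degree u = 1}

/-!
Gluing a `γ_R(G)`-function on the copy of `G` with a `γ_R(H)`-function, minus its root value `1`,
on every copy of `H` gives the upper bound.

Conversely, let `F` be a Roman dominating function of `G ∘ H` and `w a` its weight on the copy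
`H_a`. Raising the root of `H_a` to `1` makes `F` Roman dominating on `H`, so
`w a ≥ γ_R(H) - 1`, and `a ↦ min 2 (w a + 1 - γ_R(H))` is Roman dominating on `G`: if it vanishes
at `a`, then `F` is not Roman dominating on `H_a`, so the root `(a, v)` needs a neighbour `(u, v)`
of value `2`; the restriction of `F` to `H_u` is then Roman dominating but not minimum (its root
value is not `1`), so `w u ≥ γ_R(H) + 1`.
-/

section RomanDomination

variable {α : Type*} [Fintype α] {G : SimpleGraph α} {f : α → ℕ}

lemma romanDomNum_le_sum (h : IsRDF G f) : romanDomNum G ≤ ∑ u, f u :=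
  Nat.sInf_le ⟨f, h, rfl⟩

variable (G) in
lemma exists_isRDF_sum_eq_romanDomNum : ∃ f : α → ℕ, IsRDF G f ∧ ∑ u, f u = romanDomNum G :=
  Nat.sInf_mem (s := {k | ∃ f : α → ℕ, IsRDF G f ∧ ∑ u, f u = k})
    ⟨_, fun _ => 1, ⟨fun _ => one_le_two, fun _ h => absurd h one_ne_zero⟩, rfl⟩

variable (G) in
lemma one_le_romanDomNum [Nonempty α] : 1 ≤ romanDomNum G := by
  obtain ⟨f, hf, hsum⟩ := exists_isRDF_sum_eq_romanDomNum G
  rw [← hsum, Nat.one_le_iff_ne_zero]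
  intro hzero
  have hf0 : ∀ u, f u = 0 := fun u => (Finset.sum_eq_zero_iff.mp hzero) u (mem_univ u)
  obtain ⟨w, -, hw⟩ := hf.2 Classical.ofNonempty (hf0 _)
  simp [hf0 w] at hw

lemma romanDomNum_le_sum_add_one (v : α) (hle : ∀ u, f u ≤ 2)
    (hdom : ∀ u, u ≠ v → f u = 0 → ∃ w, G.Adj u w ∧ f w = 2) :
    romanDomNum G ≤ ∑ u, f u + 1 := by
  set f' := Function.update f v (max (f v) 1)
  have hf' : IsRDF G f' := by
    refine ⟨fun u => ?_, fun u hu => ?_⟩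
    · rcases eq_or_ne u v with rfl | huv
      · simpa [f'] using hle u
      · simpa [f', huv] using hle u
    · have huv : u ≠ v := by rintro rfl; simp [f'] at hu
      obtain ⟨w, hadj, hw⟩ := hdom u huv (by simpa [f', huv] using hu)
      refine ⟨w, hadj, ?_⟩
      rcases eq_or_ne w v with rfl | hwv
      · simp [f', hw]
      · simpa [f', hwv] using hw
  have hsum : ∑ u, f' u + f v = ∑ u, f u + max (f v) 1 := by
    rw [Finset.sum_update_of_mem (mem_univ v), Finset.sdiff_singleton_eq_erase,
      ← Finset.add_sum_erase _ f (mem_univ v)]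
    ring
  have := romanDomNum_le_sum hf'
  omega

lemma romanDomNum_lt_sum_of_eq_two {v : α}
    (hv : ∀ f : α → ℕ, IsRDF G f → ∑ u, f u = romanDomNum G → f v = 1)
    (hf : IsRDF G f) (hfv : f v = 2) : romanDomNum G < ∑ u, f u := by
  refine (romanDomNum_le_sum hf).lt_of_ne fun heq => ?_
  have := hv f hf heq.symm
  omega

end RomanDomination

section RootedProduct

variable {α β : Type*} {G : SimpleGraph α} {H : SimpleGraph β} {v : β}

lemma isRDF_rootedProd_glue {g : α → ℕ} {f : β → ℕ} (hg : IsRDF G g) (hf : IsRDF H f)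
    (hfv : f v ≠ 2) :
    IsRDF (rootedProd G H v) (fun x => if x.2 = v then g x.1 else f x.2) := by
  refine ⟨fun x => ?_, fun ⟨a, b⟩ h0 => ?_⟩
  · dsimp only
    split
    · exact hg.1 _
    · exact hf.1 _
  · by_cases hb : b = v
    · simp only [hb, if_true] at h0
      obtain ⟨u, hadj, hu⟩ := hg.2 a h0
      exact ⟨(u, v), Or.inl ⟨hb, rfl, hadj⟩, by simpa using hu⟩
    · simp only [hb, if_false] at h0
      obtain ⟨w, hadj, hw⟩ := hf.2 b h0
      have hwv : w ≠ v := by rintro rfl; exact hfv hw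
      exact ⟨(a, w), Or.inr ⟨rfl, hadj⟩, by simpa [hwv] using hw⟩

namespace IsRDF

variable {F : α × β → ℕ} (hF : IsRDF (rootedProd G H v) F)
include hF

lemma exists_adj_curry_eq_two {a : α} {b : β} (hb : b ≠ v) (h0 : F (a, b) = 0) :
    ∃ b', H.Adj b b' ∧ F (a, b') = 2 := by
  obtain ⟨⟨u, b'⟩, (⟨hbv, -, -⟩ | ⟨rfl, hadj⟩), h2⟩ := hF.2 (a, b) h0
  · exact absurd hbv hb
  · exact ⟨b', hadj, h2⟩

lemma isRDF_curry (a : α) (hroot : F (a, v) ≠ 0 ∨ ∃ b', H.Adj v b' ∧ F (a, b') = 2) :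
    IsRDF H (Function.curry F a) := by
  refine ⟨fun b => hF.1 (a, b), fun b h0 => ?_⟩
  rcases eq_or_ne b v with rfl | hb
  · exact hroot.resolve_left (not_not.mpr h0)
  · exact hF.exists_adj_curry_eq_two hb h0

variable [Fintype β]

lemma romanDomNum_le_sum_curry_add_one (a : α) :
    romanDomNum H ≤ ∑ b, F (a, b) + 1 :=
  romanDomNum_le_sum_add_one v (fun b => hF.1 (a, b))
    fun _ hb h0 => hF.exists_adj_curry_eq_two hb h0

lemma isRDF_excess (hv : ∀ f : β → ℕ, IsRDF H f → ∑ u, f u = romanDomNum H → f v = 1) :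
    IsRDF G (fun a => min 2 (∑ b, F (a, b) + 1 - romanDomNum H)) := by
  refine ⟨fun a => min_le_left _ _, fun a ha => ?_⟩
  dsimp only at ha ⊢
  have hlight : ∑ b, F (a, b) < romanDomNum H := by omega
  have hroot : ¬ (F (a, v) ≠ 0 ∨ ∃ b', H.Adj v b' ∧ F (a, b') = 2) := fun hroot =>
    (romanDomNum_le_sum (hF.isRDF_curry a hroot)).not_gt hlight
  push Not at hroot
  obtain ⟨⟨u, b'⟩, (⟨-, rfl, hadj⟩ | ⟨rfl, hadj⟩), h2⟩ := hF.2 (a, v) hroot.1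
  · have hheavy : romanDomNum H < ∑ b, F (u, b) :=
      romanDomNum_lt_sum_of_eq_two hv (hF.isRDF_curry u (Or.inl (by simp [h2]))) h2
    exact ⟨u, hadj, by omega⟩
  · exact absurd h2 (hroot.2 b' hadj)

end IsRDF

variable [Fintype α] [Fintype β]

lemma sum_rootedProd_glue (g : α → ℕ) (f : β → ℕ) :
    ∑ x : α × β, (if x.2 = v then g x.1 else f x.2) =
      Fintype.card α * ∑ b ∈ univ.erase v, f b + ∑ a, g a := by
  have hfiber : ∀ a, ∑ b, (if b = v then g a else f b) = g a + ∑ b ∈ univ.erase v, f b := by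
    intro a
    rw [← Finset.add_sum_erase _ _ (mem_univ v), if_pos rfl]
    congr 1
    exact Finset.sum_congr rfl fun b hb => if_neg (Finset.ne_of_mem_erase hb)
  rw [Fintype.sum_prod_type]
  simp only [hfiber, Finset.sum_add_distrib, Finset.sum_const, card_univ, smul_eq_mul]
  ring

lemma romanDomNum_rootedProd_le
    (hv : ∀ f : β → ℕ, IsRDF H f → ∑ u, f u = romanDomNum H → f v = 1) :
    romanDomNum (rootedProd G H v) ≤ Fintype.card α * (romanDomNum H - 1) + romanDomNum G := by
  obtain ⟨f, hf, hfsum⟩ := exists_isRDF_sum_eq_romanDomNum H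
  obtain ⟨g, hg, hgsum⟩ := exists_isRDF_sum_eq_romanDomNum G
  have hfv : f v = 1 := hv f hf hfsum
  have herase : ∑ b ∈ univ.erase v, f b = romanDomNum H - 1 := by
    have := Finset.add_sum_erase _ f (mem_univ v)
    omega
  calc romanDomNum (rootedProd G H v)
      ≤ ∑ x : α × β, (if x.2 = v then g x.1 else f x.2) :=
        romanDomNum_le_sum (isRDF_rootedProd_glue hg hf (by omega))
    _ = Fintype.card α * (romanDomNum H - 1) + romanDomNum G := by
        rw [sum_rootedProd_glue, herase, hgsum]

lemma IsRDF.romanDomNum_rootedProd_add_le_sum {F : α × β → ℕ} (hF : IsRDF (rootedProd G H v) F)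
    (hv : ∀ f : β → ℕ, IsRDF H f → ∑ u, f u = romanDomNum H → f v = 1) :
    Fintype.card α * (romanDomNum H - 1) + romanDomNum G ≤ ∑ x, F x := by
  have hH : 1 ≤ romanDomNum H := have : Nonempty β := ⟨v⟩; one_le_romanDomNum H
  have hsplit : ∀ a, ∑ b, F (a, b) =
      (romanDomNum H - 1) + (∑ b, F (a, b) + 1 - romanDomNum H) := fun a => by
    have := hF.romanDomNum_le_sum_curry_add_one a
    omega
  calc Fintype.card α * (romanDomNum H - 1) + romanDomNum G
      ≤ Fintype.card α * (romanDomNum H - 1) +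
          ∑ a, min 2 (∑ b, F (a, b) + 1 - romanDomNum H) := by
        gcongr
        exact romanDomNum_le_sum (hF.isRDF_excess hv)
    _ ≤ Fintype.card α * (romanDomNum H - 1) + ∑ a, (∑ b, F (a, b) + 1 - romanDomNum H) := by
        gcongr with a
        exact min_le_right _ _
    _ = ∑ x, F x := by
        rw [Fintype.sum_prod_type, Finset.sum_congr rfl fun a _ => hsplit a,
          Finset.sum_add_distrib, Finset.sum_const, card_univ, smul_eq_mul]

end RootedProduct

theorem stmt7_general {α β : Type*} [Fintype α] [Fintype β]
    (G : SimpleGraph α) (H : SimpleGraph β) (v : β)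
    (hv : ∀ f : β → ℕ, IsRDF H f → ∑ u, f u = romanDomNum H → f v = 1) :
    romanDomNum (rootedProd G H v) =
      Fintype.card α * (romanDomNum H - 1) + romanDomNum G := by
  refine le_antisymm (romanDomNum_rootedProd_le hv) ?_
  obtain ⟨F, hF, hFsum⟩ := exists_isRDF_sum_eq_romanDomNum (rootedProd G H v)
  exact hFsum ▸ hF.romanDomNum_rootedProd_add_le_sum hv

/-- if every minimum Roman dominating function of `H` assigns `1` to the root `v`,
then `γ_R(G∘H) = n·(γ_R(H) − 1) + γ_R(G)`. -/
theorem stmt7 {α β : Type*} [Fintype α] [Fintype β]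
    (G : SimpleGraph α) (H : SimpleGraph β) (v : β)
    (hn : 2 ≤ Fintype.card α) (hm : 2 ≤ Fintype.card β)
    (hv : ∀ f : β → ℕ, IsRDF H f → ∑ u, f u = romanDomNum H → f v = 1) :
    romanDomNum (rootedProd G H v) =
      Fintype.card α * (romanDomNum H - 1) + romanDomNum G :=
  stmt7_general G H v hv
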